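/- In the fusion semiring of A_u(F), for every x ∈ ℕ * ℕ one has r_e ⊆ r_x ⊗ r_{x̄} (the basis element of the empty word appears with multiplicity ≥ 1 in the product), where x̄ is the image of x under the involution swapping the two generators; moreover x̄ is the unique y ∈ ℕ * ℕ such that r_e appears in r_x ⊗ r_y. -/
import Mathlib


-- The free monoid on two generators `α, β` is modelled as `List Bool`.
/-- The involution exchanging the two generators: `(u v)‾ = v̄ ū`. -/
def wbar (x : List Bool) : List Bool := (x.map not).reverse

/-- The fusion product on basis elements: `r_x ⊗ r_y = Σ_{x = a g, y = ḡ b} r_{a b}`,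
as a multiset (element of the free commutative monoid `ℕ·M`). -/
def fuseBasis (x y : List Bool) : Multiset (List Bool) :=
  ((List.range (x.length + 1)).filterMap fun i =>
    let g := x.drop i
    if y.take g.length = wbar g then some (x.take i ++ y.drop g.length) else none : List (List Bool))

lemma wbar_length (x : List Bool) : (wbar x).length = x.length := by
  simp [wbar]

lemma mem_fuse_iff (x y : List Bool) : [] ∈ fuseBasis x y ↔ y = wbar x := by
  constructor
  · intro h
    simp only [fuseBasis, Multiset.mem_coe, List.mem_filterMap, List.mem_range] at h
    obtain ⟨i, hi, hf⟩ := h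
    split_ifs at hf with hc
    · simp only [Option.some.injEq, List.append_eq_nil_iff] at hf
      obtain ⟨h1, h2⟩ := hf
      have hx : x.drop i = x := by
        rcases List.take_eq_nil_iff.mp h1 with h | h
        · simp [h]
        · simp [h]
      rw [hx] at hc h2
      calc y = y.take x.length ++ y.drop x.length := (List.take_append_drop _ _).symm
        _ = wbar x := by rw [hc, h2, List.append_nil]
  · rintro rfl
    simp only [fuseBasis, Multiset.mem_coe, List.mem_filterMap, List.mem_range]
    refine ⟨0, by omega, ?_⟩
    simp [List.take_of_length_le (le_of_eq (wbar_length x)),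
      List.drop_of_length_le (le_of_eq (wbar_length x))]

/-- `r_e ⊆ r_x ⊗ r_{x̄}`, and `x̄` is the unique `y` such that `r_e` appears in
`r_x ⊗ r_y`. -/
theorem stmt_4 (x : List Bool) :
    1 ≤ (fuseBasis x (wbar x)).count [] ∧
      ∀ y : List Bool, 0 < (fuseBasis x y).count [] ↔ y = wbar x := by
  constructor
  · exact Multiset.one_le_count_iff_mem.mpr ((mem_fuse_iff x (wbar x)).mpr rfl)
  · intro y
    rw [Multiset.count_pos, mem_fuse_iff]
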